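/- Jucys–Murphy-type product formula for the bt-Weingarten function: Let k ≥ 1. In the module of formal power series in X with coefficients in the free ℤ[b,y]-module with basis 𝒫_k, with the operators 𝒥_i acting coefficientwise, Σ_{𝔪 ∈ 𝒫_k} Wg^(bt)(𝔪) · 𝔪 = (y + X𝒥_k)(1 + X𝒥_k)^{−1} (y + X𝒥_{k−1})(1 + X𝒥_{k−1})^{−1} ⋯ (y + X𝒥_1)(1 + X𝒥_1)^{−1} (𝔢_k), where (1 + X𝒥_i)^{−1} denotes the operator-valued power series Σ_{j≥0} (−X)^j 𝒥_i^j. -/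

import Mathlib

open scoped Classical
open MeasureTheory



/-- A pair partition of `{1, …, 2k}`, encoded as an involution of `ℕ` that
moves exactly the points `1, …, 2k`.  The pairs are the two-element sets `{a, f a}`. -/
structure PairPartition (k : ℕ) where
  f : ℕ → ℕ
  invol : ∀ a, f (f a) = a
  moves : ∀ a, f a ≠ a ↔ (1 ≤ a ∧ a ≤ 2 * k)

namespace PairPartition

/-- The function underlying the identity (trivial) pair partition
`(1 2 | 3 4 | ⋯ | 2k-1 2k)`. -/
def trivFun (k : ℕ) (a : ℕ) : ℕ :=
  if 1 ≤ a ∧ a ≤ 2 * k then (if a % 2 = 1 then a + 1 else a - 1) else a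

/-- The identity pair partition `𝔢_k = (1 2 | 3 4 | ⋯ | 2k-1 2k)`. -/
def triv (k : ℕ) : PairPartition k where
  f := trivFun k
  invol := by intro a; unfold trivFun; split_ifs <;> omega
  moves := by intro a; unfold trivFun; split_ifs <;> omega

theorem ext' {k : ℕ} {m m' : PairPartition k} (h : m.f = m'.f) : m = m' := by
  cases m; cases m'; simpa using h

/-- The action of the transposition `(i j) ∈ S_{2k}` on pair partitions of `{1, …, 2k}`
(defined to do nothing if `i` or `j` lies outside `{1, …, 2k}`). -/
def swapAct {k : ℕ} (i j : ℕ) (m : PairPartition k) : PairPartition k :=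
  if h : 1 ≤ i ∧ i ≤ 2 * k ∧ 1 ≤ j ∧ j ≤ 2 * k then
    { f := fun a => Equiv.swap i j (m.f (Equiv.swap i j a))
      invol := by intro a; simp [m.invol]
      moves := by
        obtain ⟨hi1, hi2, hj1, hj2⟩ := h
        intro a
        have key : ∀ x y : ℕ, Equiv.swap i j x ≠ y ↔ x ≠ Equiv.swap i j y := by
          intro x y
          constructor
          · intro hxy hc; apply hxy; rw [hc]; simp
          · intro hxy hc; apply hxy; rw [← hc]; simp
        rw [key, ← Equiv.swap_apply_self i j a, Equiv.swap_apply_self i j a]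
        rw [m.moves (Equiv.swap i j a)]
        rcases eq_or_ne a i with rfl | hai
        · rw [Equiv.swap_apply_left]; omega
        rcases eq_or_ne a j with rfl | haj
        · rw [Equiv.swap_apply_right]; omega
        · rw [Equiv.swap_apply_of_ne_of_ne hai haj] }
  else m

/-- Removing the pair `{2k-1, 2k}` from a pair partition: the operation `𝔪 ↦ 𝔪↓`
(defined to return the trivial pair partition if `{2k-1, 2k} ∉ 𝔪`). -/
def down {k : ℕ} (m : PairPartition k) : PairPartition (k - 1) :=
  if h : m.f (2 * k - 1) = 2 * k then
    { f := fun a => if a = 2 * k - 1 ∨ a = 2 * k then a else m.f a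
      invol := by
        intro a
        by_cases ha : a = 2 * k - 1 ∨ a = 2 * k
        · simp [ha]
        · have h2k : m.f (2 * k) = 2 * k - 1 := by
            conv_lhs => rw [← h]
            exact m.invol _
          have hne1 : m.f a ≠ 2 * k - 1 := by
            intro hfa
            have h1 : m.f (m.f a) = m.f (2 * k - 1) := by rw [hfa]
            rw [m.invol, h] at h1
            exact ha (Or.inr h1)
          have hne2 : m.f a ≠ 2 * k := by
            intro hfa
            have h1 : m.f (m.f a) = m.f (2 * k) := by rw [hfa]
            rw [m.invol, h2k] at h1
            exact ha (Or.inl h1)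
          simp only [if_neg ha, if_neg (not_or.mpr ⟨hne1, hne2⟩), m.invol]
      moves := by
        intro a
        by_cases ha : a = 2 * k - 1 ∨ a = 2 * k
        · simp only [if_pos ha]
          rcases ha with ha | ha <;> subst ha <;> constructor <;> intro h' <;> first
            | exact absurd rfl h'
            | omega
        · push_neg at ha
          obtain ⟨ha1, ha2⟩ := ha
          simp only [if_neg (not_or.mpr ⟨ha1, ha2⟩)]
          rw [m.moves a]
          omega }
  else triv (k - 1)

/-- A pair partition as a permutation (involution) of `ℕ`. -/
def perm {k : ℕ} (m : PairPartition k) : Equiv.Perm ℕ :=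
  Function.Involutive.toPerm m.f m.invol

end PairPartition

namespace PairPartition

/-- The connected component (cycle) of the multigraph `Γ(𝔪)` containing a vertex `v`:
the orbit of `v` under the group generated by the involutions `𝔢_k` and `𝔪`. -/
def gammaOrbit {k : ℕ} (m : PairPartition k) (v : ℕ) : Set ℕ :=
  MulAction.orbit (Subgroup.closure {(triv k).perm, m.perm} : Subgroup (Equiv.Perm ℕ)) v

/-- The charge function of `Γ(𝔪)`: `charge m v` holds iff `v` receives charge `+`,
i.e. iff `v` is at even distance (in `Γ(𝔪)`) from the largest label of its cycle.
The vertices at even distance from the largest label `M` of a cycle are exactly the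
orbit of `M` under the cyclic group generated by `𝔪 ∘ 𝔢_k`. -/
def charge {k : ℕ} (m : PairPartition k) (v : ℕ) : Prop :=
  v ∈ MulAction.orbit (Subgroup.zpowers (m.perm * (triv k).perm) : Subgroup (Equiv.Perm ℕ))
        (sSup (gammaOrbit m v))

/-- The weight `ω^(b)(𝔪, (i j)·𝔪)` attached to the transposition `(i j)` acting on `𝔪`:
it is `1` if the charges of `i` and `j` in `Γ(𝔪)` agree, and `b` otherwise. -/
noncomputable def omegab {R : Type*} [CommRing R] (b : R) {k : ℕ}
    (m : PairPartition k) (i j : ℕ) : R :=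
  if (charge m i ↔ charge m j) then 1 else b

/-- The number of cycles of `Γ(𝔪)` of length `2ℓ`, i.e. the multiplicity of `ℓ`
in the coset-type `λ(𝔪)` of `𝔪`. -/
noncomputable def cycleCount {k : ℕ} (m : PairPartition k) (ℓ : ℕ) : ℕ :=
  (((Finset.Icc 1 (2 * k)).filter fun a => (gammaOrbit m a).ncard = 2 * ℓ).card) / (2 * ℓ)

/-- Two pair partitions have the same coset-type iff `Γ(𝔪)` and `Γ(𝔪')` have the same
number of cycles of every length. -/
def SameCosetType {k : ℕ} (m m' : PairPartition k) : Prop :=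
  ∀ ℓ : ℕ, cycleCount m ℓ = cycleCount m' ℓ

/-- The pair partition `𝔪` has coset-type the multiset `μ` (a partition of `k`,
presented as the multiset of its parts). -/
def HasCosetType {k : ℕ} (m : PairPartition k) (μ : Multiset ℕ) : Prop :=
  ∀ ℓ : ℕ, 1 ≤ ℓ → μ.count ℓ = cycleCount m ℓ

/-- All lists of length `n` with entries in the finset `S`. -/
def listsLen (S : Finset (ℕ × ℕ)) : ℕ → Finset (List (ℕ × ℕ))
  | 0 => {[]}
  | n + 1 => (S ×ˢ listsLen S n).image fun p => p.1 :: p.2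

/-- Apply a sequence `τ = (τ_1, …, τ_r)` of transpositions (each encoded as a pair)
to a pair partition, the rightmost transposition acting first:
`τ_1 ∘ τ_2 ∘ ⋯ ∘ τ_r · 𝔪`. -/
def applyFacts {k : ℕ} (l : List (ℕ × ℕ)) (m : PairPartition k) : PairPartition k :=
  l.foldr (fun t acc => swapAct t.1 t.2 acc) m

/-- `l` is a monotone factorisation of the pair partition `𝔪 ∈ 𝒫_k`: a sequence of
transpositions `(a_s b_s)` with `a_s < b_s`, all `b_s` odd, `b_1 ≤ b_2 ≤ ⋯ ≤ b_r`,
and `τ_1 ∘ ⋯ ∘ τ_r · 𝔪 = 𝔢_k`. -/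
def IsMonoFact {k : ℕ} (m : PairPartition k) (l : List (ℕ × ℕ)) : Prop :=
  (∀ t ∈ l, 1 ≤ t.1 ∧ t.1 < t.2 ∧ t.2 ≤ 2 * k ∧ Odd t.2) ∧
  List.Pairwise (· ≤ ·) (l.map Prod.snd) ∧
  applyFacts l m = triv k

/-- The hive number of a monotone factorisation: the number of distinct values among
`b_1, …, b_r`. -/
def hive (l : List (ℕ × ℕ)) : ℕ := (l.map Prod.snd).toFinset.card

/-- The flip number of a monotone factorisation `τ` of `𝔪`: the number of indices `s`
with `ω^(b)(𝔪^(s), τ_s · 𝔪^(s)) = b`, where `𝔪^(s) = τ_{s+1} ∘ ⋯ ∘ τ_r · 𝔪`. -/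
noncomputable def flip {k : ℕ} (m : PairPartition k) : List (ℕ × ℕ) → ℕ
  | [] => 0
  | t :: rest =>
      (if (charge (applyFacts rest m) t.1 ↔ charge (applyFacts rest m) t.2) then 0 else 1)
        + flip m rest

/-- The finset of monotone factorisations of `𝔪 ∈ 𝒫_k` of length `r`. -/
noncomputable def monoFinset {k : ℕ} (m : PairPartition k) (r : ℕ) : Finset (List (ℕ × ℕ)) :=
  (listsLen ((Finset.Icc 1 (2 * k)) ×ˢ (Finset.Icc 1 (2 * k))) r).filter fun l => IsMonoFact m l

/-- A sequence of transpositions is connected (relative to level `k`) if together with the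
involution `ι = (1 2)(3 4)⋯(2k-1 2k)` it generates a subgroup acting transitively on
`{1, …, 2k}`. -/
def IsConnectedFact (k : ℕ) (l : List (ℕ × ℕ)) : Prop :=
  ∀ a ∈ Finset.Icc 1 (2 * k), ∀ b ∈ Finset.Icc 1 (2 * k),
    ∃ σ ∈ Subgroup.closure
        ({(triv k).perm} ∪ {p : Equiv.Perm ℕ | ∃ t ∈ l, p = Equiv.swap t.1 t.2}),
      σ a = b

end PairPartition


noncomputable instance matrixMeasurableSpace {N : ℕ} :
    MeasurableSpace (Matrix (Fin N) (Fin N) ℝ) :=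
  inferInstanceAs (MeasurableSpace (Fin N → Fin N → ℝ))

/-- The compact group `O(N)` of real orthogonal `N × N` matrices. -/
abbrev OrthGroup (N : ℕ) := Matrix.orthogonalGroup (Fin N) ℝ

noncomputable instance orthMeasurableSpace {N : ℕ} : MeasurableSpace (OrthGroup N) :=
  borel _

/-- The diagonal matrix `I_{M,N}` whose first `M` diagonal entries are `1` and whose
remaining entries are `0`. -/
def IMN (N M : ℕ) : Matrix (Fin N) (Fin N) ℝ :=
  Matrix.diagonal fun p => if (p : ℕ) < M then (1 : ℝ) else 0

/-- The map `O ↦ O · I_{M,N} · Oᵀ` from `O(N)` onto the space `A(M,N)` of idempotent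
real symmetric `N × N` matrices of rank `M`. -/
def grassMap (N M : ℕ) (O : OrthGroup N) : Matrix (Fin N) (Fin N) ℝ :=
  (O : Matrix (Fin N) (Fin N) ℝ) * IMN N M * Matrix.transpose (O : Matrix (Fin N) (Fin N) ℝ)


/-- The product `A_{i(1)i(2)} A_{i(3)i(4)} ⋯ A_{i(2k-1)i(2k)}` of matrix entries. -/
def prodEntries {N : ℕ} (k : ℕ) (i : ℕ → Fin N) (A : Matrix (Fin N) (Fin N) ℝ) : ℝ :=
  ∏ a ∈ Finset.range k, A (i (2 * a + 1)) (i (2 * a + 2))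



open PairPartition


/-- A step in the (`b`- or `bt`-) Weingarten graph: a type-A edge `𝔪 → (i 2k-1)·𝔪`,
a type-B edge `𝔪 → 𝔪↓`, or a type-C edge `𝔪 → ((i 2k-1)·𝔪)↓`. -/
inductive WStep where
  | A (i : ℕ) : WStep
  | B : WStep
  | C (i : ℕ) : WStep
deriving DecidableEq

/-- `IsPathTo k 𝔪 ρ` holds iff `ρ` is a path in the `bt`-Weingarten graph from the
pair partition `𝔪 ∈ 𝒫_k` to the empty pair partition. -/
def IsPathTo : (k : ℕ) → PairPartition k → List WStep → Prop
  | 0, _, [] => True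
  | _ + 1, _, [] => False
  | 0, _, _ :: _ => False
  | k + 1, m, WStep.A i :: ρ =>
      1 ≤ i ∧ i ≤ 2 * (k + 1) - 2 ∧ IsPathTo (k + 1) (swapAct i (2 * (k + 1) - 1) m) ρ
  | k + 1, m, WStep.B :: ρ =>
      m.f (2 * (k + 1) - 1) = 2 * (k + 1) ∧ IsPathTo k (down m) ρ
  | k + 1, m, WStep.C i :: ρ =>
      1 ≤ i ∧ i ≤ 2 * (k + 1) - 2 ∧ m.f i = 2 * (k + 1) ∧
        IsPathTo k (down (swapAct i (2 * (k + 1) - 1) m)) ρ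

/-- The product of the `b`-dependent edge weights along a path. -/
noncomputable def pathWeight {R : Type*} [CommRing R] (b : R) :
    (k : ℕ) → PairPartition k → List WStep → R
  | _, _, [] => 1
  | 0, _, _ :: _ => 1
  | k + 1, m, WStep.A i :: ρ =>
      omegab b m i (2 * (k + 1) - 1) * pathWeight b (k + 1) (swapAct i (2 * (k + 1) - 1) m) ρ
  | k + 1, m, WStep.B :: ρ => pathWeight b k (down m) ρ
  | k + 1, m, WStep.C i :: ρ => pathWeight b k (down (swapAct i (2 * (k + 1) - 1) m)) ρ

/-- The number of type-A edges of a path. -/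
def countA (l : List WStep) : ℕ :=
  (l.filter fun s => match s with | WStep.A _ => true | _ => false).length

/-- The number of type-B edges of a path. -/
def countB (l : List WStep) : ℕ :=
  (l.filter fun s => match s with | WStep.B => true | _ => false).length

/-- The number of type-C edges of a path. -/
def countC (l : List WStep) : ℕ :=
  (l.filter fun s => match s with | WStep.C _ => true | _ => false).length

/-- The `b`-Weingarten function `Wg^(b)(𝔪) ∈ ℤ[b]⟦X⟧`: the coefficient of `X^n` is the
sum of `(-1)^{ℓ_A(ρ)} w(ρ)` over all paths `ρ` (with no type-C edges, i.e. paths in the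
`b`-Weingarten graph) from `𝔪` to the empty pair partition with `ℓ_A(ρ) + ℓ_B(ρ) = n`.
Here `b` is the polynomial variable of `ℤ[b]`. -/
noncomputable def WgB (k : ℕ) (m : PairPartition k) : PowerSeries (Polynomial ℤ) :=
  PowerSeries.mk fun n =>
    ∑ᶠ (ρ : List WStep)
      (_ : IsPathTo k m ρ ∧ (∀ i, WStep.C i ∉ ρ) ∧ countA ρ + countB ρ = n),
      (-1 : Polynomial ℤ) ^ countA ρ * pathWeight (Polynomial.X : Polynomial ℤ) k m ρ

/-- The `bt`-Weingarten function `Wg^(bt)(𝔪) ∈ (ℤ[b,y])⟦X⟧`: the coefficient of `X^n` is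
the sum of `(-1)^{ℓ_A(ρ)} y^{ℓ_B(ρ)} w(ρ)` over all paths `ρ` in the `bt`-Weingarten graph
from `𝔪` to the empty pair partition with `ℓ_A(ρ) + ℓ_C(ρ) = n`.  Here `b = X 0` and
`y = X 1` in `ℤ[b,y] = MvPolynomial (Fin 2) ℤ`. -/
noncomputable def WgBT (k : ℕ) (m : PairPartition k) :
    PowerSeries (MvPolynomial (Fin 2) ℤ) :=
  PowerSeries.mk fun n =>
    ∑ᶠ (ρ : List WStep) (_ : IsPathTo k m ρ ∧ countA ρ + countC ρ = n),
      (-1 : MvPolynomial (Fin 2) ℤ) ^ countA ρ * (MvPolynomial.X 1) ^ countB ρ *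
        pathWeight (MvPolynomial.X 0 : MvPolynomial (Fin 2) ℤ) k m ρ

/-- The standard basis vector `𝔪` of the free module with basis `𝒫_k`,
realised as functions `𝒫_k → R`. -/
noncomputable def basisVec {R : Type*} [CommRing R] (k : ℕ) (m : PairPartition k) :
    PairPartition k → R :=
  fun n => if n = m then 1 else 0

/-- The `b`-deformed Jucys–Murphy operator `𝒥_i` acting on the free module with basis
`𝒫_k` (realised as functions `𝒫_k → R`): on basis vectors,
`𝒥_i(𝔪) = ∑_{a=1}^{2i-2} ω^(b)((a 2i-1)·𝔪, 𝔪) · (a 2i-1)·𝔪`. -/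
noncomputable def JbOp {R : Type*} [CommRing R] (b : R) {k : ℕ} (i : ℕ)
    (v : PairPartition k → R) : PairPartition k → R :=
  fun n => ∑ a ∈ Finset.Icc 1 (2 * i - 2),
    omegab b n a (2 * i - 1) * v (swapAct a (2 * i - 1) n)

/-- The (odd) Jucys–Murphy element `J_{2i-1} = ∑_{a=1}^{2i-2} (a
 2i-1)` of the group
algebra of `S_{2k}`, acting on the free module with basis `𝒫_k` via the linear extension
of the `S_{2k}`-action on pair partitions. -/
noncomputable def JoddOp {R : Type*} [CommRing R] {k : ℕ} (i : ℕ)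
    (v : PairPartition k → R) : PairPartition k → R :=
  fun n => ∑ a ∈ Finset.Icc 1 (2 * i - 2), v (swapAct a (2 * i - 1) n)

/-- The vector `𝔭_μ = ∑_{𝔪 : λ(𝔪) = μ} 𝔪`, i.e. the indicator function of the set of
pair partitions of coset-type `μ`. -/
noncomputable def pVec {R : Type*} [CommRing R] (k : ℕ) (μ : Multiset ℕ) :
    PairPartition k → R :=
  fun m => if HasCosetType m μ then 1 else 0

noncomputable def applyPows {R : Type*} [CommRing R] (b : R) {k : ℕ} :
    List (ℕ × ℕ) → (PairPartition k → R) → (PairPartition k → R)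
  | [], v => v
  | ia :: rest, v => (JbOp b ia.1)^[ia.2] (applyPows b rest v)


/-- The coefficient ring `ℤ[b,y]⟦X⟧`, with `b = X 0` and `y = X 1`. -/
abbrev SeriesRing := PowerSeries (MvPolynomial (Fin 2) ℤ)

noncomputable def bS : SeriesRing := PowerSeries.C (MvPolynomial.X 0)
noncomputable def yS : SeriesRing := PowerSeries.C (MvPolynomial.X 1)

/-- The operator-valued power series `(1 + X·𝒥_i)⁻¹ = ∑_{j ≥ 0} (-X)^j 𝒥_i^j`
applied to a vector `v`, computed coefficientwise. -/
noncomputable def invApply (k : ℕ) (i : ℕ) (v : PairPartition k → SeriesRing) :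
    PairPartition k → SeriesRing :=
  fun n => PowerSeries.mk fun d =>
    ∑ᶠ j : ℕ, PowerSeries.coeff d
      ((-(PowerSeries.X : SeriesRing)) ^ j * ((JbOp bS i)^[j] v) n)

/-- The vector `(y + X𝒥_j)(1 + X𝒥_j)⁻¹ ⋯ (y + X𝒥_1)(1 + X𝒥_1)⁻¹ (𝔢_k)`. -/
noncomputable def prodVec (k : ℕ) : ℕ → (PairPartition k → SeriesRing)
  | 0 => fun n => if n = triv k then 1 else 0
  | j + 1 => fun n =>
      yS * invApply k (j + 1) (prodVec k j) n +
        PowerSeries.X * (JbOp bS (j + 1) (invApply k (j + 1) (prodVec k j))) n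


open MvPolynomial

/-- The formal partial derivative `∂_n = ∂/∂p_n` on the polynomial ring
`K[p_1, p_2, …]` (the variables being indexed by positive naturals);
junk value `0` for `n = 0`. -/
noncomputable def pd (K : Type*) [CommRing K] (n : ℕ) :
    MvPolynomial ℕ+ K →ₗ[K] MvPolynomial ℕ+ K :=
  if h : 0 < n then (pderiv (⟨n, h⟩ : ℕ+)).toLinearMap else 0

/-- The variable `p_n` of `K[p_1, p_2, …]`; junk value `0` for `n = 0`. -/
noncomputable def pvar (K : Type*) [CommRing K] (n : ℕ) : MvPolynomial ℕ+ K :=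
  if h : 0 < n then X ⟨n, h⟩ else 0

section SumOp

variable (K : Type*) [CommRing K]

lemma sumOp_support_subset (m : ℕ) (f : MvPolynomial ℕ+ K) :
    (Function.support fun i => ((i + m : ℕ) : K) • (pvar K i * pd K (i + m) f)) ⊆
      ((fun i => i + m) ⁻¹' ↑(f.vars.image (fun v : ℕ+ => (v : ℕ)))) := by
  intro i hi
  simp only [Function.mem_support] at hi
  by_contra hmem
  apply hi
  rcases Nat.eq_zero_or_pos (i + m) with h0 | h0
  · have hi0 : i = 0 := by omega
    subst hi0
    simp [pvar]
  · have hnot : (⟨i + m, h0⟩ : ℕ+) ∉ f.vars := by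
      intro hv
      apply hmem
      simp only [Set.mem_preimage, Finset.coe_image, Set.mem_image, Finset.mem_coe]
      exact ⟨⟨i + m, h0⟩, hv, rfl⟩
    have hz : pd K (i + m) f = 0 := by
      have hpd : pd K (i + m) = (pderiv (⟨i + m, h0⟩ : ℕ+)).toLinearMap := dif_pos h0
      rw [hpd]
      have := pderiv_eq_zero_of_notMem_vars (R := K) hnot
      exact this
    rw [hz, mul_zero, smul_zero]

lemma sumOp_support_finite (m : ℕ) (f : MvPolynomial ℕ+ K) :
    (Function.support fun i => ((i + m : ℕ) : K) • (pvar K i * pd K (i + m) f)).Finite := by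
  apply Set.Finite.subset _ (sumOp_support_subset K m f)
  apply Set.Finite.preimage
  · exact (add_left_injective m).injOn
  · exact (f.vars.image (fun v : ℕ+ => (v : ℕ))).finite_toSet

/-- The operator `∑_{i ≥ 1} (i+m) p_i ∂_{i+m}` on `K[p_1, p_2, …]`
(a well-defined linear operator, the sum being locally finite on polynomials). -/
noncomputable def sumOp (m : ℕ) : MvPolynomial ℕ+ K →ₗ[K] MvPolynomial ℕ+ K where
  toFun f := ∑ᶠ i : ℕ, ((i + m : ℕ) : K) • (pvar K i * pd K (i + m) f)
  map_add' x y := by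
    have key : ∀ i : ℕ, ((i + m : ℕ) : K) • (pvar K i * pd K (i + m) (x + y)) =
        ((i + m : ℕ) : K) • (pvar K i * pd K (i + m) x) +
          ((i + m : ℕ) : K) • (pvar K i * pd K (i + m) y) := by
      intro i
      rw [map_add, mul_add, smul_add]
    try dsimp only
    rw [finsum_congr key]
    exact finsum_add_distrib (sumOp_support_finite K m x) (sumOp_support_finite K m y)
  map_smul' c x := by
    have key : ∀ i : ℕ, ((i + m : ℕ) : K) • (pvar K i * pd K (i + m) (c • x)) =
        c • (((i + m : ℕ) : K) • (pvar K i * pd K (i + m) x)) := by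
      intro i
      rw [_root_.map_smul, smul_comm]
      congr 1
      rw [mul_smul_comm]
    try dsimp only
    rw [finsum_congr key]
    simp only [RingHom.id_apply]
    exact (smul_finsum' c (sumOp_support_finite K m x)).symm
end SumOp

/-- The `bt`-deformed Virasoro-type operator `L_m` of Theorem 3.5/4.7, acting on the
polynomial ring `K[p_1, p_2, …]`. -/
noncomputable def Lop (K : Type*) [CommRing K] (b t z hbar : K) (m : ℕ) :
    MvPolynomial ℕ+ K →ₗ[K] MvPolynomial ℕ+ K :=
  (((m : K) * Ring.inverse hbar) • pd K m)
    - (1 + b) • (∑ i ∈ Finset.Ioo 0 m,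
        (((i : ℕ) : K) * (((m - i : ℕ)) : K)) • (pd K i ∘ₗ pd K (m - i)))
    - sumOp K m
    - ((b * (m : K) * ((m - 1 : ℕ) : K)) • pd K m)
    - ((z * Ring.inverse hbar * (t - 1) * ((m - 1 : ℕ) : K)) • pd K (m - 1))
    - (if m = 1 then (z * Ring.inverse hbar * Ring.inverse hbar * Ring.inverse (1 + b)) •
        (LinearMap.id : MvPolynomial ℕ+ K →ₗ[K] MvPolynomial ℕ+ K) else 0)
open PairPartition

/-- `i : {1,…,2k} → {1,…,N}` is admissible for `𝔪`: `{a,b} ∈ 𝔪` implies `i a = i b`. -/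
def Admissible {N : ℕ} (k : ℕ) (m : PairPartition k) (i : ℕ → Fin N) : Prop :=
  ∀ a, 1 ≤ a → a ≤ 2 * k → i (m.f a) = i a

/-- `i : {1,…,2k} → {1,…,N}` is strongly admissible for `𝔪`:
for `a, b ∈ {1,…,2k}`, `i a = i b` holds iff `a = b` or `{a,b} ∈ 𝔪`. -/
def StronglyAdmissible {N : ℕ} (k : ℕ) (m : PairPartition k) (i : ℕ → Fin N) : Prop :=
  ∀ a b, 1 ≤ a → a ≤ 2 * k → 1 ≤ b → b ≤ 2 * k → (i a = i b ↔ (a = b ∨ m.f a = b))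

/-- `ĥ^{(t)}_r(𝔪)` evaluated at a real number `t`: the weighted count
`∑_{τ ∈ Mono(𝔪), ℓ(τ) = r} t^{hive(τ)}`. -/
noncomputable def hiveSum {k : ℕ} (m : PairPartition k) (r : ℕ) (t : ℝ) : ℝ :=
  ∑ l ∈ monoFinset m r, t ^ hive l

/-- The `bt`-monotone count `∑_{τ ∈ Mono(𝔪), ℓ(τ) = r} b^{flip(τ)} t^{hive(τ)}`
in `ℤ[b,t]`, with `b = X 0` and `t = X 1`. -/
noncomputable def btSum {k : ℕ} (m : PairPartition k) (r : ℕ) : MvPolynomial (Fin 2) ℤ :=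
  ∑ l ∈ monoFinset m r,
    (MvPolynomial.X 0 : MvPolynomial (Fin 2) ℤ) ^ (flip m l) *
      (MvPolynomial.X 1) ^ (hive l)

/-- The connected `bt`-monotone count
`∑_{τ ∈ CMono(𝔪), ℓ(τ) = r} b^{flip(τ)} t^{hive(τ)}` in `ℚ[b,t]`,
with `b = X 0` and `t = X 1`. -/
noncomputable def cMonoSum {k : ℕ} (m : PairPartition k) (r : ℕ) : MvPolynomial (Fin 2) ℚ :=
  ∑ l ∈ (monoFinset m r).filter (fun l => IsConnectedFact k l),
    (MvPolynomial.X 0 : MvPolynomial (Fin 2) ℚ) ^ (flip m l) *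
      (MvPolynomial.X 1) ^ (hive l)

/-- The operator `c + J_{2i-1}` on the free module with basis `𝒫_k`. -/
noncomputable def affJoddOp {k : ℕ} (c : ℝ) (i : ℕ) (v : PairPartition k → ℝ) :
    PairPartition k → ℝ :=
  fun n => c * v n + JoddOp i v n


/-!
Write `W_k = ∑_𝔪 Wg^(bt)(𝔪) 𝔪` and let `ι : 𝒫_k → 𝒫_{k+1}` add the pair `{2k+1, 2k+2}`.
Splitting a path at its first edge gives `(1 + X𝒥_{k+1}) W_{k+1} = (y + X𝒥_{k+1}) ι(W_k)`:
type-A edges contribute `-X𝒥_{k+1} W_{k+1}`, type-B edges `y ι(W_k)`, and type-C edges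
`X𝒥_{k+1} ι(W_k)`: the terms of `𝒥_{k+1} ι(W_k)` at `𝔪` come from the transpositions
`(i 2k+1)` with `{i, 2k+2} ∈ 𝔪`, and their weight is `1` because `i` and `2k+1` lie in the same
orbit of `𝔪 ∘ 𝔢_{k+1}`, hence carry the same charge. For `i ≤ k` the operator `𝒥_i` commutes
with `ι`, since deleting the top pair changes neither the cycles of `Γ(𝔪)` nor the charges
below `2k+1`. So the product `P_{k+1} = (y + X𝒥_{k+1})(1 + X𝒥_{k+1})⁻¹ ι(P_k)` satisfies the
same equation, and `1 + X𝒥_{k+1}` is injective on power series. Induction on `k` concludes.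
-/

open MulAction Subgroup in
theorem orbit_closure_subset_of_eqOn {α : Type*} {G H : Set (Equiv.Perm α)} {S : Set α}
    (hG : ∀ g ∈ G, ∀ y, g y ∈ S ↔ y ∈ S) (hGH : ∀ g ∈ G, ∃ h ∈ H, Set.EqOn g h S)
    {x : α} (hx : x ∈ S) : orbit (closure G) x ⊆ orbit (closure H) x := by
  have key : ∀ σ ∈ closure G, (∀ y, σ y ∈ S ↔ y ∈ S) ∧ ∃ τ ∈ closure H, Set.EqOn σ τ S := by
    intro σ hσ
    induction hσ using closure_induction with
    | mem g hg =>
      obtain ⟨h, hh, hgh⟩ := hGH g hg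
      exact ⟨hG g hg, h, subset_closure hh, hgh⟩
    | one => exact ⟨fun _ => Iff.rfl, 1, one_mem _, fun _ _ => rfl⟩
    | mul σ σ' _ _ ih ih' =>
      obtain ⟨⟨hS, τ, hτ, he⟩, ⟨hS', τ', hτ', he'⟩⟩ := And.intro ih ih'
      refine ⟨fun y => (hS _).trans (hS' y), τ * τ', mul_mem hτ hτ', fun y hy => ?_⟩
      simp only [Equiv.Perm.mul_apply, ← he' hy, he ((hS' y).mpr hy)]
    | inv σ _ ih =>
      obtain ⟨hS, τ, hτ, he⟩ := ih
      have hS_inv : ∀ y, σ⁻¹ y ∈ S ↔ y ∈ S := fun y => by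
        simpa using (hS (σ⁻¹ y)).symm
      refine ⟨hS_inv, τ⁻¹, inv_mem hτ, fun y hy => ?_⟩
      exact (Equiv.Perm.inv_eq_iff_eq.mpr (by rw [← he ((hS_inv y).mpr hy)]; simp)).symm
  rintro _ ⟨⟨σ, hσ⟩, rfl⟩
  obtain ⟨-, τ, hτ, he⟩ := key σ hσ
  exact ⟨⟨τ, hτ⟩, (he hx).symm⟩

theorem orbit_closure_eq_of_eqOn {α : Type*} {G H : Set (Equiv.Perm α)} {S : Set α}
    (hG : ∀ g ∈ G, ∀ y, g y ∈ S ↔ y ∈ S) (hH : ∀ h ∈ H, ∀ y, h y ∈ S ↔ y ∈ S)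
    (hGH : ∀ g ∈ G, ∃ h ∈ H, Set.EqOn g h S) (hHG : ∀ h ∈ H, ∃ g ∈ G, Set.EqOn h g S)
    {x : α} (hx : x ∈ S) :
    MulAction.orbit (Subgroup.closure G) x = MulAction.orbit (Subgroup.closure H) x :=
  subset_antisymm (orbit_closure_subset_of_eqOn hG hGH hx) (orbit_closure_subset_of_eqOn hH hHG hx)

section NeumannSeries

open scoped PowerSeries

variable {ι R : Type*} [CommRing R]

theorem eq_zero_of_forall_exists_X_pow_smul {u : ι → R⟦X⟧}
    (h : ∀ N, ∃ w, u = (PowerSeries.X : R⟦X⟧) ^ N • w) : u = 0 := by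
  funext n
  ext d
  obtain ⟨w, hw⟩ := h (d + 1)
  rw [hw, Pi.smul_apply, smul_eq_mul, PowerSeries.coeff_X_pow_mul', if_neg (by omega)]
  rfl

theorem X_pow_dvd_mk_finsum_sub (f : ℕ → R⟦X⟧)
    (hf : ∀ j, (PowerSeries.X : R⟦X⟧) ^ j ∣ f j) (N : ℕ) :
    (PowerSeries.X : R⟦X⟧) ^ N ∣
      PowerSeries.mk (fun d => ∑ᶠ j, PowerSeries.coeff d (f j)) - ∑ j ∈ Finset.range N, f j := by
  refine PowerSeries.X_pow_dvd_iff.mpr fun d hd => ?_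
  rw [map_sub, PowerSeries.coeff_mk, map_sum, sub_eq_zero]
  refine finsum_eq_sum_of_support_subset _ fun j hj => ?_
  by_contra hjN
  exact hj (PowerSeries.X_pow_dvd_iff.mp (hf j) d (by rw [Finset.coe_range] at hjN; grind))

variable (T : Module.End (R⟦X⟧) (ι → R⟦X⟧))

theorem eq_zero_of_add_X_smul_eq_zero {u : ι → R⟦X⟧}
    (h : u + (PowerSeries.X : R⟦X⟧) • T u = 0) : u = 0 := by
  refine eq_zero_of_forall_exists_X_pow_smul fun N => ?_
  induction N with
  | zero => exact ⟨u, (one_smul _ _).symm⟩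
  | succ N ih =>
    obtain ⟨w, rfl⟩ := ih
    refine ⟨-T w, ?_⟩
    rw [eq_neg_of_add_eq_zero_left h, map_smul, pow_succ', mul_smul, smul_neg, smul_neg]

theorem geom_partial_sum_add_X_smul (v : ι → R⟦X⟧) (N : ℕ) :
    (∑ j ∈ Finset.range N, (-PowerSeries.X : R⟦X⟧) ^ j • (T ^ j) v) +
        (PowerSeries.X : R⟦X⟧) •
          T (∑ j ∈ Finset.range N, (-PowerSeries.X : R⟦X⟧) ^ j • (T ^ j) v) =
      v - (-PowerSeries.X : R⟦X⟧) ^ N • (T ^ N) v := by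
  induction N with
  | zero => simp
  | succ N ih =>
    rw [Finset.sum_range_succ, map_add, smul_add, add_add_add_comm, ih, map_smul, pow_succ' T N,
      Module.End.mul_apply, pow_succ', neg_mul, neg_smul, mul_smul]
    abel

/-- `(1 + X • T)⁻¹ v`, as the Neumann series `∑ⱼ (-X)ʲ Tʲ v` summed coefficientwise. -/
noncomputable def neumannSeries (v : ι → R⟦X⟧) : ι → R⟦X⟧ :=
  fun n => PowerSeries.mk fun d =>
    ∑ᶠ j, PowerSeries.coeff d ((-PowerSeries.X : R⟦X⟧) ^ j * (T ^ j) v n)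

theorem neumannSeries_add_X_smul (v : ι → R⟦X⟧) :
    neumannSeries T v + (PowerSeries.X : R⟦X⟧) • T (neumannSeries T v) = v := by
  -- The partial sums `S` agree with the series modulo `X ^ N` and satisfy
  -- `(1 + X • T) S = v - (-X) ^ N • T ^ N v`, so both sides differ by a multiple of `X ^ N`.
  rw [← sub_eq_zero]
  refine eq_zero_of_forall_exists_X_pow_smul fun N => ?_
  set S := ∑ j ∈ Finset.range N, (-PowerSeries.X : R⟦X⟧) ^ j • (T ^ j) v
  have hS : ∀ n, (PowerSeries.X : R⟦X⟧) ^ N ∣ neumannSeries T v n - S n := fun n => by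
    simpa [neumannSeries, S, Finset.sum_apply] using X_pow_dvd_mk_finsum_sub
      (fun j => (-PowerSeries.X : R⟦X⟧) ^ j * (T ^ j) v n)
      (fun j => by rw [neg_pow]; exact dvd_mul_of_dvd_left (dvd_mul_left _ _) _) N
  choose w hw using hS
  have hw' : neumannSeries T v = S + (PowerSeries.X : R⟦X⟧) ^ N • w := by
    rw [← sub_eq_iff_eq_add']; exact funext hw
  refine ⟨w + (PowerSeries.X : R⟦X⟧) • T w - (-1 : R⟦X⟧) ^ N • (T ^ N) v, ?_⟩
  rw [hw', map_add, smul_add, add_add_add_comm, geom_partial_sum_add_X_smul, map_smul, neg_pow,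
    mul_smul, smul_sub, smul_add, smul_comm (_ ^ N) (PowerSeries.X : R⟦X⟧) (T w),
    smul_comm ((-1 : R⟦X⟧) ^ N)]
  abel

theorem add_X_smul_commute (c : R⟦X⟧) (u : ι → R⟦X⟧) :
    (c • u + (PowerSeries.X : R⟦X⟧) • T u) +
        (PowerSeries.X : R⟦X⟧) • T (c • u + (PowerSeries.X : R⟦X⟧) • T u) =
      c • (u + (PowerSeries.X : R⟦X⟧) • T u) +
        (PowerSeries.X : R⟦X⟧) • T (u + (PowerSeries.X : R⟦X⟧) • T u) := by
  simp only [map_add, map_smul, smul_add]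
  rw [smul_comm c (PowerSeries.X : R⟦X⟧)]
  abel

end NeumannSeries

namespace PairPartition

variable {k : ℕ}

@[simp] theorem perm_apply (m : PairPartition k) (y : ℕ) : m.perm y = m.f y := rfl

theorem f_eq_self_of_not_mem (m : PairPartition k) {a : ℕ} (h : ¬(1 ≤ a ∧ a ≤ 2 * k)) :
    m.f a = a :=
  of_not_not fun h' => h ((m.moves a).mp h')

theorem f_top_symm {m : PairPartition k} (h : m.f (2 * k - 1) = 2 * k) :
    m.f (2 * k) = 2 * k - 1 := by
  have := m.invol (2 * k - 1); rwa [h] at this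

theorem swapAct_f (m : PairPartition k) {i j : ℕ} (hi : 1 ≤ i ∧ i ≤ 2 * k)
    (hj : 1 ≤ j ∧ j ≤ 2 * k) (a : ℕ) :
    (swapAct i j m).f a = Equiv.swap i j (m.f (Equiv.swap i j a)) := by
  rw [swapAct, dif_pos ⟨hi.1, hi.2, hj.1, hj.2⟩]

theorem down_f (m : PairPartition k) (h : m.f (2 * k - 1) = 2 * k) (a : ℕ) :
    (down m).f a = if a = 2 * k - 1 ∨ a = 2 * k then a else m.f a := by
  rw [down, dif_pos h]

theorem eq_triv_zero (m : PairPartition 0) : m = triv 0 :=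
  ext' (funext fun a => by
    rw [f_eq_self_of_not_mem m (by omega), f_eq_self_of_not_mem (triv 0) (by omega)])

theorem triv_f_top : (triv (k + 1)).f (2 * (k + 1) - 1) = 2 * (k + 1) := by
  simp only [triv, trivFun]; split_ifs <;> omega

theorem triv_f_eq_of_ne_top {a : ℕ} (h : ¬(a = 2 * (k + 1) - 1 ∨ a = 2 * (k + 1))) :
    (triv (k + 1)).f a = (triv k).f a := by
  simp only [triv, trivFun]; split_ifs <;> omega

theorem eq_triv_iff (m : PairPartition (k + 1)) :
    m = triv (k + 1) ↔ m.f (2 * (k + 1) - 1) = 2 * (k + 1) ∧ down m = triv k := by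
  constructor
  · rintro rfl
    refine ⟨triv_f_top, ext' (funext fun a => ?_)⟩
    rw [down_f _ triv_f_top]
    split_ifs with ha
    · simp only [triv, trivFun]; split_ifs <;> omega
    · exact triv_f_eq_of_ne_top ha
  · rintro ⟨htop, hdown⟩
    refine ext' (funext fun a => ?_)
    have hd := congrArg (fun m' : PairPartition k => m'.f a) hdown
    simp only [down_f _ htop] at hd
    split_ifs at hd with ha
    · rcases ha with rfl | rfl
      · rw [htop, triv_f_top]
      · rw [f_top_symm htop, f_top_symm triv_f_top]
    · rw [hd, triv_f_eq_of_ne_top ha]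

theorem swap_apply_of_top {i j a : ℕ} (hi : i ≤ 2 * k) (hj : j ≤ 2 * k)
    (ha : a = 2 * (k + 1) - 1 ∨ a = 2 * (k + 1)) : Equiv.swap i j a = a :=
  Equiv.swap_apply_of_ne_of_ne (by omega) (by omega)

theorem swapAct_f_top_iff (m : PairPartition (k + 1)) {i j : ℕ} (hi : 1 ≤ i ∧ i ≤ 2 * k)
    (hj : 1 ≤ j ∧ j ≤ 2 * k) :
    (swapAct i j m).f (2 * (k + 1) - 1) = 2 * (k + 1) ↔ m.f (2 * (k + 1) - 1) = 2 * (k + 1) := by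
  rw [swapAct_f m (by omega) (by omega), Equiv.swap_apply_eq_iff,
    swap_apply_of_top hi.2 hj.2 (.inl rfl), swap_apply_of_top hi.2 hj.2 (.inr rfl)]

theorem down_swapAct (m : PairPartition (k + 1)) {i j : ℕ} (hi : 1 ≤ i ∧ i ≤ 2 * k)
    (hj : 1 ≤ j ∧ j ≤ 2 * k) (h : m.f (2 * (k + 1) - 1) = 2 * (k + 1)) :
    down (swapAct i j m) = swapAct i j (down m) := by
  refine ext' (funext fun a => ?_)
  rw [down_f _ ((swapAct_f_top_iff m hi hj).mpr h), swapAct_f (down m) hi hj]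
  by_cases ha : a = 2 * (k + 1) - 1 ∨ a = 2 * (k + 1)
  · rw [if_pos ha, swap_apply_of_top hi.2 hj.2 ha, down_f m h, if_pos ha,
      swap_apply_of_top hi.2 hj.2 ha]
  · have hsa : ¬(Equiv.swap i j a = 2 * (k + 1) - 1 ∨ Equiv.swap i j a = 2 * (k + 1)) := by
      rw [Equiv.swap_apply_def]; split_ifs <;> omega
    rw [if_neg ha, swapAct_f m (by omega) (by omega), down_f m h, if_neg hsa]

theorem swapAct_top_f_top_iff (m : PairPartition (k + 1)) {i : ℕ} (hi : 1 ≤ i ∧ i ≤ 2 * k) :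
    (swapAct i (2 * (k + 1) - 1) m).f (2 * (k + 1) - 1) = 2 * (k + 1) ↔ m.f i = 2 * (k + 1) := by
  rw [swapAct_f m (by omega) (by omega), Equiv.swap_apply_eq_iff, Equiv.swap_apply_right,
    Equiv.swap_apply_of_ne_of_ne (x := 2 * (k + 1)) (by omega) (by omega)]

theorem perm_apply_mem_compl_iff (m : PairPartition k) {T : Set ℕ} (hT : Set.MapsTo m.f T T)
    (y : ℕ) : m.perm y ∈ Tᶜ ↔ y ∈ Tᶜ :=
  not_congr ⟨fun h => m.invol y ▸ hT h, fun h => hT h⟩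

open MulAction Subgroup

theorem charge_perm_mul_triv_apply (m : PairPartition k) (v : ℕ) :
    charge m ((m.perm * (triv k).perm) v) ↔ charge m v := by
  set σ := m.perm * (triv k).perm
  have hσ : σ ∈ Subgroup.closure {(triv k).perm, m.perm} :=
    mul_mem (subset_closure (by simp)) (subset_closure (by simp))
  have hΓ : gammaOrbit m (σ v) = gammaOrbit m v :=
    orbit_smul (⟨σ, hσ⟩ : Subgroup.closure _) v
  rw [charge, charge, hΓ, mem_orbit_symm, mem_orbit_symm (a₁ := v),
    show σ v = (⟨σ, mem_zpowers σ⟩ : zpowers σ) • v from rfl, orbit_smul]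

theorem omegab_eq_one_of_f_eq_top {R : Type*} [CommRing R] (b : R) (m : PairPartition (k + 1))
    {a : ℕ} (ha : m.f a = 2 * (k + 1)) : omegab b m a (2 * (k + 1) - 1) = 1 := by
  have hσ : (m.perm * (triv (k + 1)).perm) (2 * (k + 1) - 1) = a := by
    simp only [Equiv.Perm.mul_apply, perm_apply]
    rw [triv_f_top, ← ha, m.invol]
  rw [omegab, if_pos (hσ ▸ charge_perm_mul_triv_apply m _)]

theorem charge_down (m : PairPartition (k + 1)) (h : m.f (2 * (k + 1) - 1) = 2 * (k + 1))
    {x : ℕ} (hx : x ≤ 2 * k) : charge (down m) x ↔ charge m x := by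
  -- On `Tᶜ` the generators `𝔢_{k+1}, 𝔪` agree with `𝔢_k, 𝔪↓`, and all four preserve `Tᶜ`.
  set T : Set ℕ := {2 * (k + 1) - 1, 2 * (k + 1)}
  have hxT : x ∈ Tᶜ := by
    simp only [T, Set.mem_compl_iff, Set.mem_insert_iff, Set.mem_singleton_iff]; omega
  have hm : ∀ y, m.perm y ∈ Tᶜ ↔ y ∈ Tᶜ := perm_apply_mem_compl_iff m <| by
    rintro y (rfl | rfl) <;> simp [T, h, f_top_symm h]
  have htriv : ∀ y, (triv (k + 1)).perm y ∈ Tᶜ ↔ y ∈ Tᶜ := perm_apply_mem_compl_iff _ <| by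
    rintro y (rfl | rfl) <;> simp [T, triv_f_top, f_top_symm triv_f_top]
  have hdown : ∀ y, (down m).perm y ∈ Tᶜ ↔ y ∈ Tᶜ := perm_apply_mem_compl_iff _ <| by
    rintro y (rfl | rfl) <;> simp [T, down_f m h]
  have htriv' : ∀ y, (triv k).perm y ∈ Tᶜ ↔ y ∈ Tᶜ := perm_apply_mem_compl_iff _ <| by
    rintro y (rfl | rfl) <;> rw [f_eq_self_of_not_mem _ (by omega)] <;> simp [T]
  have hEq_m : Set.EqOn (down m).perm m.perm Tᶜ := fun y hy => by
    simp_all [T, down_f m h]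
  have hEq_triv : Set.EqOn (triv k).perm (triv (k + 1)).perm Tᶜ := fun y hy => by
    simp_all [T, triv_f_eq_of_ne_top]
  have hΓ : gammaOrbit (down m) x = gammaOrbit m x := by
    refine orbit_closure_eq_of_eqOn ?_ ?_ ?_ ?_ hxT <;> rintro g (rfl | rfl)
    exacts [htriv', hdown, htriv, hm, ⟨_, .inl rfl, hEq_triv⟩, ⟨_, .inr rfl, hEq_m⟩,
      ⟨_, .inl rfl, hEq_triv.symm⟩, ⟨_, .inr rfl, hEq_m.symm⟩]
  have hEq_σ : Set.EqOn ⇑((down m).perm * (triv k).perm) ⇑(m.perm * (triv (k + 1)).perm) Tᶜ :=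
    fun y hy => by simp only [Equiv.Perm.mul_apply, hEq_triv hy, hEq_m ((htriv y).mpr hy)]
  have hZ : orbit (zpowers ((down m).perm * (triv k).perm)) x =
      orbit (zpowers (m.perm * (triv (k + 1)).perm)) x := by
    rw [zpowers_eq_closure, zpowers_eq_closure]
    refine orbit_closure_eq_of_eqOn ?_ ?_ ?_ ?_ hxT <;> rintro g rfl
    exacts [fun y => (hdown _).trans (htriv' y), fun y => (hm _).trans (htriv y),
      ⟨_, rfl, hEq_σ⟩, ⟨_, rfl, hEq_σ.symm⟩]
  change x ∈ orbit (zpowers ((down m).perm * (triv k).perm)) (sSup (gammaOrbit (down m) x)) ↔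
    x ∈ orbit (zpowers (m.perm * (triv (k + 1)).perm)) (sSup (gammaOrbit m x))
  rw [mem_orbit_symm, hZ, hΓ, ← mem_orbit_symm]

theorem omegab_down {R : Type*} [CommRing R] (b : R) (m : PairPartition (k + 1))
    (h : m.f (2 * (k + 1) - 1) = 2 * (k + 1)) {a c : ℕ} (ha : a ≤ 2 * k) (hc : c ≤ 2 * k) :
    omegab b (down m) a c = omegab b m a c := by
  simp only [omegab, charge_down m h ha, charge_down m h hc]

theorem map_omegab {R S : Type*} [CommRing R] [CommRing S] (φ : R →+* S) (b : R)
    (m : PairPartition k) (i j : ℕ) : φ (omegab b m i j) = omegab (φ b) m i j := by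
  unfold omegab; split_ifs <;> simp

end PairPartition

section Operators

variable {R : Type*} [CommRing R]

noncomputable def jucysMurphy (b : R) (k i : ℕ) : Module.End R (PairPartition k → R) where
  toFun := JbOp b i
  map_add' u v := funext fun n => by simp [JbOp, mul_add, Finset.sum_add_distrib]
  map_smul' c u := funext fun n => by simp [JbOp, Finset.mul_sum, mul_left_comm]

@[simp] theorem jucysMurphy_apply (b : R) (k i : ℕ) (v : PairPartition k → R) :
    jucysMurphy b k i v = JbOp b i v := rfl

variable (R) in
/-- The linear extension of `𝔪 ↦ 𝔪 ∪ {2k+1, 2k+2}`, for vectors written as functions. -/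
noncomputable def insertTopPair (k : ℕ) :
    (PairPartition k → R) →ₗ[R] (PairPartition (k + 1) → R) where
  toFun v m := if m.f (2 * (k + 1) - 1) = 2 * (k + 1) then v (down m) else 0
  map_add' u v := funext fun m => by split_ifs <;> simp [*]
  map_smul' c u := funext fun m => by split_ifs <;> simp [*]

theorem insertTopPair_apply (k : ℕ) (v : PairPartition k → R) (m : PairPartition (k + 1)) :
    insertTopPair R k v m = if m.f (2 * (k + 1) - 1) = 2 * (k + 1) then v (down m) else 0 :=
  rfl

theorem insertTopPair_basisVec_triv (k : ℕ) :
    insertTopPair R k (basisVec k (triv k)) = basisVec (k + 1) (triv (k + 1)) := by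
  funext m
  simp only [insertTopPair_apply, basisVec, eq_triv_iff m]
  split_ifs <;> simp_all

theorem jbOp_insertTopPair {k i : ℕ} (hi : i ≤ k) (b : R) (v : PairPartition k → R) :
    JbOp b i (insertTopPair R k v) = insertTopPair R k (JbOp b i v) := by
  funext m
  have hbounds : ∀ a ∈ Finset.Icc 1 (2 * i - 2),
      (1 ≤ a ∧ a ≤ 2 * k) ∧ 1 ≤ 2 * i - 1 ∧ 2 * i - 1 ≤ 2 * k := fun a ha => by
    rw [Finset.mem_Icc] at ha; omega
  simp only [JbOp, insertTopPair_apply]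
  split_ifs with h
  · refine Finset.sum_congr rfl fun a ha => ?_
    obtain ⟨ha', hi'⟩ := hbounds a ha
    rw [if_pos ((swapAct_f_top_iff m ha' hi').mpr h), down_swapAct m ha' hi' h,
      omegab_down b m h ha'.2 hi'.2]
  · refine Finset.sum_eq_zero fun a ha => ?_
    obtain ⟨ha', hi'⟩ := hbounds a ha
    rw [if_neg (mt (swapAct_f_top_iff m ha' hi').mp h), mul_zero]

theorem jbOp_self_insertTopPair (b : R) {k : ℕ} (v : PairPartition k → R)
    (m : PairPartition (k + 1)) :
    JbOp b (k + 1) (insertTopPair R k v) m = ∑ a ∈ Finset.Icc 1 (2 * (k + 1) - 2),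
      if m.f a = 2 * (k + 1) then v (down (swapAct a (2 * (k + 1) - 1) m)) else 0 := by
  refine Finset.sum_congr rfl fun a ha => ?_
  have ha' : 1 ≤ a ∧ a ≤ 2 * k := by rw [Finset.mem_Icc] at ha; omega
  simp only [insertTopPair_apply, swapAct_top_f_top_iff m ha']
  split_ifs with h
  · rw [omegab_eq_one_of_f_eq_top b m h, one_mul]
  · rw [mul_zero]

end Operators

theorem invApply_eq_neumannSeries (k i : ℕ) (v : PairPartition k → SeriesRing) :
    invApply k i v = neumannSeries (jucysMurphy bS k i) v := by
  funext n
  simp only [invApply, neumannSeries, Module.End.pow_apply]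
  rfl

theorem invApply_add_X_smul (k i : ℕ) (v : PairPartition k → SeriesRing) :
    invApply k i v + (PowerSeries.X : SeriesRing) • JbOp bS i (invApply k i v) = v := by
  rw [invApply_eq_neumannSeries]
  exact neumannSeries_add_X_smul _ v

theorem invApply_insertTopPair {k i : ℕ} (hi : i ≤ k) (v : PairPartition k → SeriesRing) :
    invApply (k + 1) i (insertTopPair SeriesRing k v) =
      insertTopPair SeriesRing k (invApply k i v) := by
  refine sub_eq_zero.mp (eq_zero_of_add_X_smul_eq_zero (jucysMurphy bS (k + 1) i) ?_)
  rw [map_sub, smul_sub, sub_add_sub_comm, jucysMurphy_apply, invApply_add_X_smul,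
    jucysMurphy_apply, jbOp_insertTopPair hi, ← map_smul, ← map_add, invApply_add_X_smul,
    sub_self]

theorem prodVec_succ (k j : ℕ) :
    prodVec k (j + 1) = yS • invApply k (j + 1) (prodVec k j) +
      (PowerSeries.X : SeriesRing) • JbOp bS (j + 1) (invApply k (j + 1) (prodVec k j)) :=
  rfl

theorem prodVec_insertTopPair {k j : ℕ} (hj : j ≤ k) :
    prodVec (k + 1) j = insertTopPair SeriesRing k (prodVec k j) := by
  induction j with
  | zero => exact (insertTopPair_basisVec_triv k).symm
  | succ j ih =>
    rw [prodVec_succ, prodVec_succ, ih (by omega), invApply_insertTopPair hj,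
      jbOp_insertTopPair hj, map_add, map_smul, map_smul]

section Paths

section Counts

variable (i : ℕ) (ρ : List WStep)

@[simp] theorem countA_cons_A : countA (.A i :: ρ) = countA ρ + 1 := by simp [countA]
@[simp] theorem countA_cons_B : countA (.B :: ρ) = countA ρ := by simp [countA]
@[simp] theorem countA_cons_C : countA (.C i :: ρ) = countA ρ := by simp [countA]
@[simp] theorem countB_cons_A : countB (.A i :: ρ) = countB ρ := by simp [countB]
@[simp] theorem countB_cons_B : countB (.B :: ρ) = countB ρ + 1 := by simp [countB]
@[simp] theorem countB_cons_C : countB (.C i :: ρ) = countB ρ := by simp [countB]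
@[simp] theorem countC_cons_A : countC (.A i :: ρ) = countC ρ := by simp [countC]
@[simp] theorem countC_cons_B : countC (.B :: ρ) = countC ρ := by simp [countC]
@[simp] theorem countC_cons_C : countC (.C i :: ρ) = countC ρ + 1 := by simp [countC]

end Counts

noncomputable def pathTerm (k : ℕ) (m : PairPartition k) (n : ℕ) (ρ : List WStep) :
    MvPolynomial (Fin 2) ℤ :=
  if IsPathTo k m ρ ∧ countA ρ + countC ρ = n then
    (-1) ^ countA ρ * X 1 ^ countB ρ * pathWeight (X 0) k m ρ
  else 0

theorem coeff_wgBT (k : ℕ) (m : PairPartition k) (n : ℕ) :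
    PowerSeries.coeff n (WgBT k m) = ∑ᶠ ρ, pathTerm k m n ρ := by
  simp only [WgBT, PowerSeries.coeff_mk, pathTerm, finsum_eq_if]

theorem pathTerm_zero (m : PairPartition 0) (n : ℕ) (ρ : List WStep) :
    pathTerm 0 m n ρ = if ρ = [] ∧ n = 0 then 1 else 0 := by
  rcases ρ with _ | ⟨s, ρ⟩
  · rcases n with _ | n <;> simp [pathTerm, IsPathTo, countA, countB, countC, pathWeight]
  · simp [pathTerm, IsPathTo]

section FirstStep

variable {k : ℕ} (m : PairPartition (k + 1)) (n : ℕ) (ρ : List WStep)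

theorem pathTerm_nil : pathTerm (k + 1) m n [] = 0 := by
  simp [pathTerm, IsPathTo]

theorem pathTerm_A (i : ℕ) : pathTerm (k + 1) m n (.A i :: ρ) =
    (if i ∈ Finset.Icc 1 (2 * (k + 1) - 2) ∧ n ≠ 0 then -omegab (X 0) m i (2 * (k + 1) - 1)
      else 0) * pathTerm (k + 1) (swapAct i (2 * (k + 1) - 1) m) (n - 1) ρ := by
  rw [pathTerm, pathTerm]
  simp only [IsPathTo, pathWeight, countA_cons_A, countB_cons_A, countC_cons_A, Finset.mem_Icc]
  by_cases hi : (1 ≤ i ∧ i ≤ 2 * (k + 1) - 2) ∧ n ≠ 0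
  · have hn : countA ρ + 1 + countC ρ = n ↔ countA ρ + countC ρ = n - 1 := by omega
    rw [if_pos hi]
    simp only [hi, hn, true_and]
    split_ifs <;> ring
  · rw [if_neg hi, zero_mul, if_neg (by omega)]

theorem pathTerm_B : pathTerm (k + 1) m n (.B :: ρ) =
    (if m.f (2 * (k + 1) - 1) = 2 * (k + 1) then X 1 else 0) * pathTerm k (down m) n ρ := by
  rw [pathTerm, pathTerm]
  simp only [IsPathTo, pathWeight, countA_cons_B, countB_cons_B, countC_cons_B]
  by_cases h : m.f (2 * (k + 1) - 1) = 2 * (k + 1)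
  · simp only [h, true_and, if_true]
    split_ifs <;> ring
  · simp [h]

theorem pathTerm_C (i : ℕ) : pathTerm (k + 1) m n (.C i :: ρ) =
    (if i ∈ Finset.Icc 1 (2 * (k + 1) - 2) ∧ m.f i = 2 * (k + 1) ∧ n ≠ 0 then 1 else 0) *
      pathTerm k (down (swapAct i (2 * (k + 1) - 1) m)) (n - 1) ρ := by
  rw [pathTerm, pathTerm]
  simp only [IsPathTo, pathWeight, countA_cons_C, countB_cons_C, countC_cons_C, Finset.mem_Icc]
  by_cases hi : (1 ≤ i ∧ i ≤ 2 * (k + 1) - 2) ∧ m.f i = 2 * (k + 1) ∧ n ≠ 0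
  · have hn : countA ρ + (countC ρ + 1) = n ↔ countA ρ + countC ρ = n - 1 := by omega
    rw [if_pos hi]
    simp only [hi, hn, true_and, one_mul]
  · rw [if_neg hi, zero_mul, if_neg (by omega)]

end FirstStep

theorem finsum_list_wStep {M : Type*} [AddCommMonoid M] {f : List WStep → M}
    (hf : (Function.support f).Finite) :
    ∑ᶠ ρ, f ρ = f [] + ∑ᶠ i, ∑ᶠ ρ, f (.A i :: ρ) + ∑ᶠ ρ, f (.B :: ρ) +
      ∑ᶠ i, ∑ᶠ ρ, f (.C i :: ρ) := by
  have hcover : Set.univ = {[]} ∪ Set.range (fun p : ℕ × List WStep => .A p.1 :: p.2) ∪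
      Set.range (List.cons WStep.B) ∪ Set.range (fun p : ℕ × List WStep => .C p.1 :: p.2) := by
    ext (_ | ⟨_ | _ | _, _⟩) <;> simp
  have hfin : ∀ s : Set (List WStep), (s ∩ Function.support f).Finite := fun s =>
    hf.subset Set.inter_subset_right
  have hA : Function.Injective fun p : ℕ × List WStep => WStep.A p.1 :: p.2 := by
    rintro ⟨_, _⟩ ⟨_, _⟩ h; simpa using h
  have hC : Function.Injective fun p : ℕ × List WStep => WStep.C p.1 :: p.2 := by
    rintro ⟨_, _⟩ ⟨_, _⟩ h; simpa using h
  rw [← finsum_mem_univ, hcover, finsum_mem_union' _ (hfin _) (hfin _),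
    finsum_mem_union' _ (hfin _) (hfin _), finsum_mem_union' _ (hfin _) (hfin _),
    finsum_mem_singleton, finsum_mem_range hA, finsum_mem_range List.cons_injective,
    finsum_mem_range hC, finsum_curry _ (hf.preimage hA.injOn),
    finsum_curry _ (hf.preimage hC.injOn)]
  all_goals
    rw [Set.disjoint_left]
    rintro _ h ⟨_, rfl⟩
    simp at h

theorem finite_support_pathTerm (k : ℕ) (m : PairPartition k) (n : ℕ) :
    (Function.support (pathTerm k m n)).Finite := by
  induction k generalizing n with
  | zero =>
    refine (Set.finite_singleton []).subset fun ρ hρ => ?_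
    rw [Function.mem_support, pathTerm_zero] at hρ
    split_ifs at hρ with h
    exacts [h.1, absurd rfl hρ]
  | succ k ihk =>
    induction n generalizing m with
    | zero =>
      refine ((ihk (down m) 0).image (List.cons .B)).subset ?_
      rintro (_ | ⟨_ | _ | _, ρ⟩) hρ <;>
        simp_all [pathTerm_nil, pathTerm_A, pathTerm_B, pathTerm_C]
    | succ n ihn =>
      have hI := (Finset.Icc 1 (2 * (k + 1) - 2)).finite_toSet
      refine ((hI.biUnion fun i _ => (ihn (swapAct i (2 * (k + 1) - 1) m)).image
        (List.cons (.A i))).union (((ihk (down m) (n + 1)).image (List.cons .B)).union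
        (hI.biUnion fun i _ => (ihk (down (swapAct i (2 * (k + 1) - 1) m)) n).image
        (List.cons (.C i))))).subset ?_
      rintro (_ | ⟨_ | _ | _, ρ⟩) hρ <;>
        simp_all [pathTerm_nil, pathTerm_A, pathTerm_B, pathTerm_C]

theorem finsum_ite_mem_and {M : Type*} [AddCommMonoid M] (s : Finset ℕ) (p : ℕ → Prop)
    [DecidablePred p] (g : ℕ → M) :
    ∑ᶠ i, (if i ∈ s ∧ p i then g i else 0) = ∑ i ∈ s, if p i then g i else 0 := by
  rw [finsum_eq_sum_of_support_subset _ (s := s) fun i hi => by by_contra h; simp_all]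
  exact Finset.sum_congr rfl fun i hi => by simp [hi]

theorem coeff_wgBT_succ (k : ℕ) (m : PairPartition (k + 1)) (n : ℕ) :
    PowerSeries.coeff n (WgBT (k + 1) m) =
      (∑ i ∈ Finset.Icc 1 (2 * (k + 1) - 2), if n ≠ 0 then -omegab (X 0) m i (2 * (k + 1) - 1) *
          PowerSeries.coeff (n - 1) (WgBT (k + 1) (swapAct i (2 * (k + 1) - 1) m)) else 0) +
      (if m.f (2 * (k + 1) - 1) = 2 * (k + 1) then
          X 1 * PowerSeries.coeff n (WgBT k (down m)) else 0) +
      ∑ i ∈ Finset.Icc 1 (2 * (k + 1) - 2), if m.f i = 2 * (k + 1) ∧ n ≠ 0 then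
          PowerSeries.coeff (n - 1) (WgBT k (down (swapAct i (2 * (k + 1) - 1) m))) else 0 := by
  rw [coeff_wgBT, finsum_list_wStep (finite_support_pathTerm _ _ _)]
  simp only [pathTerm_nil, pathTerm_A, pathTerm_B, pathTerm_C, zero_add]
  simp only [← mul_finsum, ← coeff_wgBT]
  simp only [ite_mul, zero_mul, one_mul, finsum_ite_mem_and]

theorem wgBT_zero (m : PairPartition 0) : WgBT 0 m = 1 := by
  refine PowerSeries.ext fun n => ?_
  rw [coeff_wgBT, finsum_eq_single _ [] fun ρ hρ => by simp [pathTerm_zero, hρ], pathTerm_zero,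
    PowerSeries.coeff_one]
  simp

theorem wgBT_succ_add_X_smul (k : ℕ) :
    (fun m => WgBT (k + 1) m) +
        (PowerSeries.X : SeriesRing) • JbOp bS (k + 1) (fun m => WgBT (k + 1) m) =
      yS • insertTopPair SeriesRing k (fun m => WgBT k m) +
        (PowerSeries.X : SeriesRing) •
          JbOp bS (k + 1) (insertTopPair SeriesRing k (fun m => WgBT k m)) := by
  funext m
  refine PowerSeries.ext fun n => ?_
  simp only [Pi.add_apply, Pi.smul_apply, smul_eq_mul, map_add, jbOp_self_insertTopPair,
    insertTopPair_apply]
  rw [coeff_wgBT_succ]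
  rcases n with _ | n
  · simp [yS, apply_ite (PowerSeries.coeff 0)]
  · simp only [JbOp, bS, yS, ← map_omegab, PowerSeries.coeff_succ_X_mul,
      PowerSeries.coeff_C_mul, map_sum, apply_ite (PowerSeries.coeff _), map_zero, mul_ite,
      mul_zero, add_tsub_cancel_right, ne_eq, Nat.add_one_ne_zero, not_false_eq_true, if_true,
      and_true, neg_mul, Finset.sum_neg_distrib]
    abel

end Paths

theorem product_formula_WgBT_general
    (k : ℕ) :
    (fun m : PairPartition k => WgBT k m) = prodVec k k := by
  induction k with
  | zero => exact funext fun m => (wgBT_zero m).trans (if_pos (eq_triv_zero m)).symm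
  | succ k ih =>
    set A := invApply (k + 1) (k + 1) (prodVec (k + 1) k)
    have hA : A + (PowerSeries.X : SeriesRing) • JbOp bS (k + 1) A =
        insertTopPair SeriesRing k (fun m => WgBT k m) := by
      rw [ih, ← prodVec_insertTopPair le_rfl]
      exact invApply_add_X_smul _ _ _
    refine sub_eq_zero.mp (eq_zero_of_add_X_smul_eq_zero (jucysMurphy bS (k + 1) (k + 1)) ?_)
    rw [map_sub, smul_sub, sub_add_sub_comm, jucysMurphy_apply, jucysMurphy_apply,
      wgBT_succ_add_X_smul, prodVec_succ, ← hA]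
    exact sub_eq_zero.mpr
      (add_X_smul_commute (jucysMurphy bS (k + 1) (k + 1)) yS A).symm

/-- **Jucys–Murphy-type product formula for the `bt`-Weingarten function**
(Proposition 5.7, power-series form).  Let `k ≥ 1`.  In the module of formal power
series in `X` with coefficients in the free `ℤ[b,y]`-module with basis `𝒫_k` (realised
as functions `𝒫_k → (ℤ[b,y])⟦X⟧`), with the `b`-deformed Jucys–Murphy operators `𝒥_i`
acting coefficientwise,
`∑_{𝔪 ∈ 𝒫_k} Wg^(bt)(𝔪) 𝔪
  = (y + X𝒥_k)(1 + X𝒥_k)⁻¹ ⋯ (y + X𝒥_1)(1 + X𝒥_1)⁻¹ (𝔢_k)`,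
where `(1 + X𝒥_i)⁻¹ = ∑_{j ≥ 0} (-X)^j 𝒥_i^j`. -/
theorem product_formula_WgBT
    (k : ℕ) (hk : 1 ≤ k) :
    (fun m : PairPartition k => WgBT k m) = prodVec k k :=
  product_formula_WgBT_general k
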